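/- Let n ∈ ℕ and j ∈ {0,…,n} with n + j even. Then the value of the associated Legendre function at zero satisfies P_n^j(0) = (-1)^{(n+j)/2} (n+j-1)!!/(n-j)!!, and P_n^j(0) = 0 if n + j is odd. -/

import Mathlib

/-!
Since `t ↦ (t² - 1)ⁿ` is a polynomial, its `(n + j)`-th derivative at `0` is `(n + j)!` times its
coefficient of `t^(n + j)`. Only even powers occur, the coefficient of `t^(2m)` being
`(-1)^(n - m) · C(n, m)`, so `P_n^j(0)` vanishes for odd `n + j`; for `n + j = 2m` the value follows
from `(2m)! = (2m)‼ (2m - 1)‼` and `(2k)‼ = 2ᵏ k!`.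
-/

open Real

/-- The associated Legendre function `P_n^j` (with Condon–Shortley phase). -/
noncomputable def assocLegendre (n j : ℕ) : ℝ → ℝ := fun t =>
  ((-1 : ℝ) ^ j / (2 ^ n * Nat.factorial n)) * (1 - t ^ 2) ^ ((j : ℝ) / 2) *
    iteratedDeriv (n + j) (fun s : ℝ => (s ^ 2 - 1) ^ n) t

open Nat Polynomial

namespace Polynomial

theorem iteratedDeriv_eval {𝕜 : Type*} [NontriviallyNormedField 𝕜] (p : 𝕜[X]) (k : ℕ) :
    iteratedDeriv k (fun x => p.eval x) = fun x => (derivative^[k] p).eval x := by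
  induction k with
  | zero => rfl
  | succ k ih =>
    rw [iteratedDeriv_succ, ih, Function.iterate_succ_apply']
    funext x
    exact Polynomial.deriv _

theorem iteratedDeriv_eval_zero {𝕜 : Type*} [NontriviallyNormedField 𝕜] (p : 𝕜[X]) (k : ℕ) :
    iteratedDeriv k (fun x => p.eval x) 0 = k ! * p.coeff k := by
  simp only [iteratedDeriv_eval, ← coeff_zero_eq_eval_zero, coeff_iterate_derivative, zero_add,
    descFactorial_self, nsmul_eq_mul]

theorem coeff_X_sq_sub_one_pow {R : Type*} [CommRing R] (n k : ℕ) :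
    ((X ^ 2 - 1 : R[X]) ^ n).coeff k =
      if Even k then (-1) ^ (n - k / 2) * (n.choose (k / 2) : R) else 0 := by
  have hexpand : (X ^ 2 - 1 : R[X]) ^ n = expand R 2 ((X + C (-1)) ^ n) := by
    simp [sub_eq_add_neg]
  rw [hexpand, coeff_expand two_pos, coeff_X_add_C_pow]
  simp only [even_iff_two_dvd]

end Polynomial

theorem Nat.factorial_mul_choose_mul_doubleFactorial {m n : ℕ} (hmn : m ≤ n) :
    (2 * m)! * n.choose m * (2 * (n - m))‼ = (2 * m - 1)‼ * (2 ^ n * n !) := by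
  have hfact : (2 * m)! = (2 * m)‼ * (2 * m - 1)‼ := by
    cases m with
    | zero => rfl
    | succ m =>
      rw [show 2 * (m + 1) = 2 * m + 1 + 1 by ring, factorial_eq_mul_doubleFactorial]
      rfl
  obtain ⟨k, rfl⟩ := exists_add_of_le hmn
  rw [hfact, doubleFactorial_two_mul, doubleFactorial_two_mul, Nat.add_sub_cancel_left,
    ← choose_mul_factorial_mul_factorial hmn, Nat.add_sub_cancel_left, pow_add]
  ring

theorem assocLegendre_zero_eq (n j : ℕ) :
    assocLegendre n j 0 =
      (-1) ^ j / (2 ^ n * n !) * ((n + j)! * ((X ^ 2 - 1 : ℝ[X]) ^ n).coeff (n + j)) := by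
  have hpoly : (fun s : ℝ => (s ^ 2 - 1) ^ n) = fun s => ((X ^ 2 - 1 : ℝ[X]) ^ n).eval s := by
    simp
  simp [assocLegendre, hpoly, iteratedDeriv_eval_zero]

theorem assocLegendre_zero_of_eq_two_mul {n j m : ℕ} (hm : n + j = 2 * m) (hmn : m ≤ n) :
    assocLegendre n j 0 = (-1) ^ m * (2 * m - 1)‼ / (2 * (n - m))‼ := by
  have hsign : (-1 : ℝ) ^ j * (-1) ^ (n - m) = (-1) ^ m := by
    rw [← pow_add]
    congr 1
    omega
  have hcount : ((2 * m)! * n.choose m * (2 * (n - m))‼ : ℝ) = (2 * m - 1)‼ * (2 ^ n * n !) := by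
    exact_mod_cast factorial_mul_choose_mul_doubleFactorial hmn
  rw [assocLegendre_zero_eq, coeff_X_sq_sub_one_pow, if_pos ⟨m, by omega⟩,
    show (n + j) / 2 = m by omega, hm]
  field_simp
  linear_combination ((2 * m)! * n.choose m * (2 * (n - m))‼ : ℝ) * hsign + (-1 : ℝ) ^ m * hcount

theorem assocLegendre_zero (n j : ℕ) (hj : j ≤ n) :
    (Even (n + j) →
      assocLegendre n j 0 =
        (-1 : ℝ) ^ ((n + j) / 2) *
          (Nat.doubleFactorial (n + j - 1) : ℝ) / (Nat.doubleFactorial (n - j) : ℝ)) ∧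
    (¬ Even (n + j) → assocLegendre n j 0 = 0) := by
  refine ⟨fun ⟨m, hm⟩ => ?_, fun hodd => ?_⟩
  · rw [show (n + j) / 2 = m by omega, show n + j - 1 = 2 * m - 1 by omega,
      show n - j = 2 * (n - m) by omega]
    exact assocLegendre_zero_of_eq_two_mul (by omega) (by omega)
  · simp [assocLegendre_zero_eq, coeff_X_sq_sub_one_pow, hodd]
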